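/- arXiv:2106.09680 — 5 statements merged into one kernel-verified Lean document; each statement's English description precedes it below -/
import Mathlib

section
/- Let ε ≥ 0 and μ > 0, and let Φ denote the cumulative distribution function of the standard normal distribution N(0,1). For the threshold set S* = {x ∈ ℝ : x > ε/μ + μ/2}, the hockey-stick quantity satisfies N(μ,1)(S*) − e^ε · N(0,1)(S*) = Φ(−ε/μ + μ/2) − e^ε · Φ(−ε/μ − μ/2), where N(m,1) denotes the Gaussian probability measure on ℝ with mean m and variance 1. -/
open MeasureTheory ProbabilityTheory

/-- The standard normal cumulative distribution function Φ. -/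
noncomputable def stdNormalCDF (x : ℝ) : ℝ :=
  ((gaussianReal 0 1) (Set.Iic x)).toReal

lemma gaussianReal_singleton (a : ℝ) : (gaussianReal 0 1) {a} = 0 :=
  gaussianReal_absolutelyContinuous 0 one_ne_zero (measure_singleton a)

lemma gaussianReal_Ioi_symm (a : ℝ) :
    (gaussianReal 0 1) (Set.Ioi a) = (gaussianReal 0 1) (Set.Iic (-a)) := by
  have hmap : (gaussianReal (0:ℝ) 1).map (fun x => (-1 : ℝ) * x) = gaussianReal 0 1 := by
    rw [gaussianReal_map_const_mul]
    norm_num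
  conv_lhs => rw [← hmap]
  rw [Measure.map_apply (by fun_prop) measurableSet_Ioi]
  have hpre : (fun x => (-1 : ℝ) * x) ⁻¹' Set.Ioi a = Set.Iio (-a) := by
    ext x; simp [Set.mem_Ioi, Set.mem_Iio]
  rw [hpre]
  rw [show Set.Iic (-a) = Set.Iio (-a) ∪ {-a} by
    ext x; simp [le_iff_lt_or_eq, or_comm],
    measure_union (by simp) (measurableSet_singleton _),
    gaussianReal_singleton, add_zero]

lemma gaussianReal_shift (m a : ℝ) :
    (gaussianReal m 1) (Set.Ioi a) = (gaussianReal 0 1) (Set.Ioi (a - m)) := by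
  have hmap : (gaussianReal (0:ℝ) 1).map (· + m) = gaussianReal m 1 := by
    rw [gaussianReal_map_add_const]; norm_num
  rw [← hmap, Measure.map_apply (by fun_prop) measurableSet_Ioi]
  congr 1
  ext x; simp [Set.mem_Ioi]

/-- For ε ≥ 0, μ > 0 and the threshold set S* = {x : x > ε/μ + μ/2}, the hockey-stick
quantity N(μ,1)(S*) − e^ε · N(0,1)(S*) equals Φ(−ε/μ + μ/2) − e^ε · Φ(−ε/μ − μ/2). -/
theorem gaussian_hockey_stick_threshold_eq (ε μ : ℝ) (hε : 0 ≤ ε) (hμ : 0 < μ) :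
    ((gaussianReal μ 1) {x : ℝ | ε / μ + μ / 2 < x}).toReal
      - Real.exp ε * ((gaussianReal 0 1) {x : ℝ | ε / μ + μ / 2 < x}).toReal
    = stdNormalCDF (-(ε / μ) + μ / 2) - Real.exp ε * stdNormalCDF (-(ε / μ) - μ / 2) := by
  have hset : {x : ℝ | ε / μ + μ / 2 < x} = Set.Ioi (ε / μ + μ / 2) := rfl
  rw [hset, stdNormalCDF, stdNormalCDF, gaussianReal_shift,
    gaussianReal_Ioi_symm, gaussianReal_Ioi_symm]
  ring_nf
end

section
/- Let ε ≥ 0 and μ > 0, and let Φ denote the cumulative distribution function of the standard normal distribution. For every Borel measurable set S ⊆ ℝ, N(μ,1)(S) − e^ε · N(0,1)(S) ≤ Φ(−ε/μ + μ/2) − e^ε · Φ(−ε/μ − μ/2), where N(m,1) denotes the Gaussian probability measure on ℝ with mean m and variance 1. In particular, the pair of measures (N(μ,1), N(0,1)) satisfies the (ε, δ)-differential-privacy inequality N(μ,1)(S) ≤ e^ε N(0,1)(S) + δ with δ = Φ(−ε/μ + μ/2) − e^ε Φ(−ε/μ − μ/2). -/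
open MeasureTheory ProbabilityTheory

lemma gaussianReal_toReal_eq (m : ℝ) (s : Set ℝ) :
    ((gaussianReal m 1) s).toReal = ∫ x in s, gaussianPDFReal m 1 x := by
  rw [gaussianReal_apply_eq_integral m one_ne_zero s,
    ENNReal.toReal_ofReal (integral_nonneg fun x => gaussianPDFReal_nonneg _ _ _)]

lemma gaussianPDFReal_neg_neg (m x : ℝ) :
    gaussianPDFReal m 1 x = gaussianPDFReal (-m) 1 (-x) := by
  unfold gaussianPDFReal
  congr 2
  ring

lemma gaussianReal_Ioi_toReal (m t : ℝ) :
    ((gaussianReal m 1) (Set.Ioi t)).toReal = stdNormalCDF (m - t) := by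
  rw [gaussianReal_toReal_eq]
  have h1 : (∫ x in Set.Ioi t, gaussianPDFReal m 1 x)
      = ∫ x in Set.Iic (-t), gaussianPDFReal (-m) 1 x := by
    rw [← integral_comp_neg_Ioi]
    exact setIntegral_congr_fun measurableSet_Ioi fun x _ => gaussianPDFReal_neg_neg m x
  rw [h1, ← gaussianReal_toReal_eq]
  have h2 : gaussianReal (-m) 1 = (gaussianReal 0 1).map (· + (-m)) := by
    rw [gaussianReal_map_add_const]
    norm_num
  rw [h2, Measure.map_apply (measurable_add_const (-m)) measurableSet_Iic]
  have h3 : ((· + (-m)) ⁻¹' Set.Iic (-t)) = Set.Iic (m - t) := by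
    ext x
    simp only [Set.mem_preimage, Set.mem_Iic]
    constructor <;> intro h <;> linarith
  rw [h3]
  rfl

lemma gaussianPDFReal_ratio (μ x : ℝ) :
    gaussianPDFReal μ 1 x = gaussianPDFReal 0 1 x * Real.exp (μ * x - μ ^ 2 / 2) := by
  unfold gaussianPDFReal
  conv_rhs => rw [mul_assoc, ← Real.exp_add]
  congr 1
  push_cast
  ring

/-- For ε ≥ 0 and μ > 0, every Borel set S satisfies the hockey-stick bound
N(μ,1)(S) − e^ε · N(0,1)(S) ≤ Φ(−ε/μ + μ/2) − e^ε · Φ(−ε/μ − μ/2); in particular the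
pair (N(μ,1), N(0,1)) satisfies the (ε,δ)-DP inequality with
δ = Φ(−ε/μ + μ/2) − e^ε Φ(−ε/μ − μ/2). -/
theorem gaussian_hockey_stick_le (ε μ : ℝ) (hε : 0 ≤ ε) (hμ : 0 < μ) :
    ∀ S : Set ℝ, MeasurableSet S →
      (((gaussianReal μ 1) S).toReal - Real.exp ε * ((gaussianReal 0 1) S).toReal
          ≤ stdNormalCDF (-(ε / μ) + μ / 2) - Real.exp ε * stdNormalCDF (-(ε / μ) - μ / 2))
      ∧ (((gaussianReal μ 1) S).toReal
          ≤ Real.exp ε * ((gaussianReal 0 1) S).toReal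
            + (stdNormalCDF (-(ε / μ) + μ / 2)
                - Real.exp ε * stdNormalCDF (-(ε / μ) - μ / 2))) := by
  intro S hS
  set t : ℝ := ε / μ + μ / 2 with ht
  set g : ℝ → ℝ := fun x => gaussianPDFReal μ 1 x - Real.exp ε * gaussianPDFReal 0 1 x with hg
  -- sign facts
  have hsign_pos : ∀ x ∈ Set.Ioi t, 0 ≤ g x := by
    intro x hx
    have hx' : t ≤ x := le_of_lt hx
    have hle : ε ≤ μ * x - μ ^ 2 / 2 := by
      have h2 : μ * (ε / μ + μ / 2) ≤ μ * x := mul_le_mul_of_nonneg_left hx' hμ.le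
      have h3 : μ * (ε / μ) = ε := by field_simp
      nlinarith [h2, h3]
    have := Real.exp_le_exp.2 hle
    simp only [hg, gaussianPDFReal_ratio μ x]
    nlinarith [gaussianPDFReal_nonneg 0 1 x]
  have hsign_neg : ∀ x, x ≤ t → g x ≤ 0 := by
    intro x hx
    have hle : μ * x - μ ^ 2 / 2 ≤ ε := by
      have hx' : x ≤ ε / μ + μ / 2 := hx
      have h2 : μ * x ≤ μ * (ε / μ + μ / 2) := mul_le_mul_of_nonneg_left hx' hμ.le
      have h3 : μ * (ε / μ) = ε := by field_simp
      nlinarith [h2, h3]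
    have := Real.exp_le_exp.2 hle
    simp only [hg, gaussianPDFReal_ratio μ x]
    nlinarith [gaussianPDFReal_nonneg 0 1 x]
  -- integrability
  have hint : Integrable g := by
    exact (integrable_gaussianPDFReal μ 1).sub
      ((integrable_gaussianPDFReal 0 1).const_mul (Real.exp ε))
  -- key inequality on integrals
  have hkey : (∫ x in S, g x) ≤ ∫ x in Set.Ioi t, g x := by
    have hsplit : (∫ x in S, g x)
        = (∫ x in S ∩ Set.Ioi t, g x) + ∫ x in S \ Set.Ioi t, g x :=
      (integral_inter_add_diff measurableSet_Ioi hint.integrableOn).symm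
    have h1 : (∫ x in S ∩ Set.Ioi t, g x) ≤ ∫ x in Set.Ioi t, g x := by
      refine setIntegral_mono_set hint.integrableOn ?_
        (HasSubset.Subset.eventuallyLE Set.inter_subset_right)
      filter_upwards [ae_restrict_mem measurableSet_Ioi] with x hx using hsign_pos x hx
    have h2 : (∫ x in S \ Set.Ioi t, g x) ≤ 0 := by
      refine setIntegral_nonpos (hS.diff measurableSet_Ioi) ?_
      intro x hx
      exact hsign_neg x (le_of_not_gt hx.2)
    linarith
  -- identify both sides
  have hlhs : (∫ x in S, g x)
      = ((gaussianReal μ 1) S).toReal - Real.exp ε * ((gaussianReal 0 1) S).toReal := by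
    rw [gaussianReal_toReal_eq, gaussianReal_toReal_eq]
    rw [show (∫ x in S, g x) = (∫ x in S, gaussianPDFReal μ 1 x)
        - ∫ x in S, Real.exp ε * gaussianPDFReal 0 1 x from
      integral_sub (integrable_gaussianPDFReal μ 1).integrableOn
        (((integrable_gaussianPDFReal 0 1).const_mul (Real.exp ε)).integrableOn)]
    rw [integral_const_mul]
  have hrhs : (∫ x in Set.Ioi t, g x)
      = stdNormalCDF (-(ε / μ) + μ / 2) - Real.exp ε * stdNormalCDF (-(ε / μ) - μ / 2) := by
    rw [show (∫ x in Set.Ioi t, g x) = (∫ x in Set.Ioi t, gaussianPDFReal μ 1 x)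
        - ∫ x in Set.Ioi t, Real.exp ε * gaussianPDFReal 0 1 x from
      integral_sub (integrable_gaussianPDFReal μ 1).integrableOn
        (((integrable_gaussianPDFReal 0 1).const_mul (Real.exp ε)).integrableOn)]
    rw [integral_const_mul, ← gaussianReal_toReal_eq, ← gaussianReal_toReal_eq,
      gaussianReal_Ioi_toReal, gaussianReal_Ioi_toReal]
    have e1 : μ - t = -(ε / μ) + μ / 2 := by rw [ht]; ring
    have e2 : (0 : ℝ) - t = -(ε / μ) - μ / 2 := by rw [ht]; ring
    rw [e1, e2]
  have main : ((gaussianReal μ 1) S).toReal - Real.exp ε * ((gaussianReal 0 1) S).toReal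
      ≤ stdNormalCDF (-(ε / μ) + μ / 2) - Real.exp ε * stdNormalCDF (-(ε / μ) - μ / 2) := by
    rw [← hlhs, ← hrhs]; exact hkey
  exact ⟨main, by linarith⟩
end

section
/- Let ε ∈ (0,1), δ ∈ (0,1), Δ > 0, and let σ > √(2 ln(1.25/δ)) · Δ/ε. Then for all real numbers a, b with |a − b| ≤ Δ and every Borel measurable set S ⊆ ℝ, N(a, σ²)(S) ≤ e^ε · N(b, σ²)(S) + δ, where N(m, σ²) denotes the Gaussian probability measure on ℝ with mean m and variance σ². -/
/-
The set `B` where the density of `N(a, σ²)` exceeds `e^ε` times that of `N(b, σ²)` carries the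
whole excess: `N(a, σ²)(S) ≤ e^ε N(b, σ²)(S) + N(a, σ²)(B)`. The log-ratio of the two densities is
the affine function `(a - b)(2x - a - b) / (2σ²)`, so after centring at `a` (and reflecting if
`a < b`) `B` is a half-line contained in `(T, ∞)`, `T = σ²ε/Δ - Δ/2`. Writing `δ = (5/4) e^{-c²/2}`
with `c = √(2 ln(1.25/δ))`, the bound on `σ` gives `2cT > σ(2c² - 1)`. If `2c² ≥ 1`, comparing the
density of `N(0, σ²)` with that of `N(T, σ²)` on `(T, ∞)` gives
`P(Z > T) ≤ ½ e^{-T²/2σ²} ≤ ½ e^{1/2} e^{-c²/2} ≤ δ`; otherwise `δ > 15/16`, while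
`P(Z > T) ≤ ½ + |T|/σ ≤ 2/3`.
-/

open MeasureTheory ProbabilityTheory Real Set
open scoped NNReal ENNReal

theorem withDensity_apply_le_mul_add_setOf_lt {α : Type*} [MeasurableSpace α] {μ : Measure α}
    [SFinite μ] {f g : α → ℝ≥0∞} (hg : Measurable g) (c : ℝ≥0∞) (s : Set α) :
    μ.withDensity f s ≤ c * μ.withDensity g s + μ.withDensity f {x | c * g x < f x} := by
  set B := {x | c * g x < f x}
  calc μ.withDensity f s ≤ μ.withDensity f B + μ.withDensity f (s \ B) :=
        (measure_le_inter_add_sdiff _ s B).trans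
          (add_le_add_left (measure_mono inter_subset_right) _)
    _ ≤ μ.withDensity f B + ∫⁻ x in s \ B, c * g x ∂μ := by
        rw [withDensity_apply' f (s \ B)]
        exact add_le_add_right (setLIntegral_mono (hg.const_mul c) fun x hx ↦ not_lt.1 hx.2) _
    _ ≤ μ.withDensity f B + ∫⁻ x in s, c * g x ∂μ :=
        add_le_add_right (lintegral_mono_set sdiff_subset) _
    _ = c * μ.withDensity g s + μ.withDensity f B := by
        rw [lintegral_const_mul c hg, withDensity_apply' g, add_comm]

namespace ProbabilityTheory

variable {v : ℝ≥0}

lemma gaussianPDFReal_eq_exp_mul_gaussianPDFReal (a b x : ℝ) :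
    gaussianPDFReal a v x =
      exp ((a - b) * (2 * x - a - b) / (2 * v)) * gaussianPDFReal b v x := by
  rw [gaussianPDFReal, gaussianPDFReal, mul_left_comm, ← exp_add]
  congr 2
  ring

lemma gaussianPDFReal_le_inv_sqrt (m x : ℝ) : gaussianPDFReal m v x ≤ (√(2 * π * v))⁻¹ := by
  refine mul_le_of_le_one_right (by positivity) (exp_le_one_iff.2 ?_)
  exact div_nonpos_of_nonpos_of_nonneg (neg_nonpos.2 (sq_nonneg _)) (by positivity)

lemma ofReal_exp_mul_gaussianPDF_lt_gaussianPDF_iff (hv : v ≠ 0) (ε a b x : ℝ) :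
    ENNReal.ofReal (exp ε) * gaussianPDF b v x < gaussianPDF a v x ↔
      2 * v * ε < (a - b) * (2 * x - a - b) := by
  have hv' : (0 : ℝ) < 2 * v := by positivity
  rw [gaussianPDF, gaussianPDF, ← ENNReal.ofReal_mul (exp_pos ε).le,
    ENNReal.ofReal_lt_ofReal_iff (gaussianPDFReal_pos a v x hv),
    gaussianPDFReal_eq_exp_mul_gaussianPDFReal a b,
    mul_lt_mul_iff_left₀ (gaussianPDFReal_pos b v x hv), exp_lt_exp, lt_div_iff₀' hv']

lemma gaussianReal_Ioi_self (hv : v ≠ 0) (m : ℝ) : gaussianReal m v (Ioi m) = 1 / 2 := by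
  have := nullSingletonClass_gaussianReal (μ := m) hv
  have hreflect : (gaussianReal m v).map (2 * m - ·) = gaussianReal m v := by
    rw [gaussianReal_map_const_sub]
    ring_nf
  have hsymm : gaussianReal m v (Iic m) = gaussianReal m v (Ioi m) := by
    rw [← measure_congr Iio_ae_eq_Iic]
    conv_lhs => rw [← hreflect]
    rw [Measure.map_apply (by fun_prop) measurableSet_Iio]
    congr 1
    ext x
    simp only [mem_preimage, mem_Iio, mem_Ioi]
    constructor <;> intro h <;> linarith
  have htotal : gaussianReal m v (Iic m) + gaussianReal m v (Ioi m) = 1 := by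
    rw [← compl_Iic, measure_add_measure_compl measurableSet_Iic, measure_univ]
  rw [hsymm, ← two_mul] at htotal
  rw [ENNReal.eq_div_iff two_ne_zero ENNReal.ofNat_ne_top, htotal]

lemma gaussianReal_Ioi_le_ofReal_exp (hv : v ≠ 0) {m t : ℝ} (hmt : m ≤ t) :
    gaussianReal m v (Ioi t) ≤ ENNReal.ofReal (exp (-(t - m) ^ 2 / (2 * v)) / 2) := by
  set C := exp (-(t - m) ^ 2 / (2 * v))
  have hdensity : ∀ x ∈ Ioi t, gaussianPDF m v x ≤ ENNReal.ofReal C * gaussianPDF t v x := by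
    intro x hx
    rw [gaussianPDF, gaussianPDF, ← ENNReal.ofReal_mul (exp_pos _).le,
      gaussianPDFReal_eq_exp_mul_gaussianPDFReal m t]
    gcongr
    · exact gaussianPDFReal_nonneg t v x
    have hxt : 0 ≤ (t - m) * (2 * x - 2 * t) :=
      mul_nonneg (by linarith) (by linarith [mem_Ioi.1 hx])
    nlinarith
  calc gaussianReal m v (Ioi t) = ∫⁻ x in Ioi t, gaussianPDF m v x := gaussianReal_apply m hv _
    _ ≤ ∫⁻ x in Ioi t, ENNReal.ofReal C * gaussianPDF t v x :=
        setLIntegral_mono ((measurable_gaussianPDF t v).const_mul _) hdensity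
    _ = ENNReal.ofReal C * (1 / 2) := by
        rw [lintegral_const_mul _ (measurable_gaussianPDF t v), ← gaussianReal_apply t hv,
          gaussianReal_Ioi_self hv]
    _ = ENNReal.ofReal (C / 2) := by
        rw [ENNReal.ofReal_div_of_pos two_pos, ENNReal.ofReal_ofNat, one_div, div_eq_mul_inv]

lemma gaussianReal_le_ofReal_mul_volume (hv : v ≠ 0) (m : ℝ) (s : Set ℝ) :
    gaussianReal m v s ≤ ENNReal.ofReal (√(2 * π * v))⁻¹ * volume s := by
  rw [gaussianReal_apply m hv, ← setLIntegral_const]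
  exact setLIntegral_mono measurable_const fun x _ ↦
    ENNReal.ofReal_le_ofReal (gaussianPDFReal_le_inv_sqrt m x)

lemma gaussianReal_Ioi_le_half_add (hv : v ≠ 0) (m t : ℝ) :
    gaussianReal m v (Ioi t) ≤ 1 / 2 + ENNReal.ofReal ((m - t) / √(2 * π * v)) := by
  calc gaussianReal m v (Ioi t) ≤ gaussianReal m v (Ioc t m) + gaussianReal m v (Ioi m) :=
        (measure_mono Ioi_subset_Ioc_union_Ioi).trans (measure_union_le _ _)
    _ ≤ ENNReal.ofReal (√(2 * π * v))⁻¹ * volume (Ioc t m) + 1 / 2 := by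
        rw [gaussianReal_Ioi_self hv]
        gcongr
        exact gaussianReal_le_ofReal_mul_volume hv m _
    _ = 1 / 2 + ENNReal.ofReal ((m - t) / √(2 * π * v)) := by
        rw [Real.volume_Ioc, ← ENNReal.ofReal_mul (by positivity), add_comm, inv_mul_eq_div]

lemma gaussianReal_setOf_ofReal_exp_mul_gaussianPDF_lt_le (hv : v ≠ 0) {ε Δ a b : ℝ}
    (hε : 0 ≤ ε) (hΔ : 0 < Δ) (hab : |a - b| ≤ Δ) :
    gaussianReal a v {x | ENNReal.ofReal (exp ε) * gaussianPDF b v x < gaussianPDF a v x}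
      ≤ gaussianReal 0 v (Ioi (v * ε / Δ - Δ / 2)) := by
  set d := |a - b|
  obtain ⟨f, hf, hf_map, hf_loss⟩ : ∃ f : ℝ → ℝ, Measurable f ∧
      (gaussianReal a v).map f = gaussianReal 0 v ∧
      ∀ x, (a - b) * (2 * x - a - b) = d * (2 * f x + d) := by
    rcases abs_choice (a - b) with h | h
    · exact ⟨(· - a), by fun_prop, by rw [gaussianReal_map_sub_const, sub_self],
        fun x ↦ by simp only [d, h]; ring⟩
    · exact ⟨(a - ·), by fun_prop, by rw [gaussianReal_map_const_sub, sub_self],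
        fun x ↦ by simp only [d, h]; ring⟩
  calc gaussianReal a v {x | ENNReal.ofReal (exp ε) * gaussianPDF b v x < gaussianPDF a v x}
      ≤ gaussianReal a v (f ⁻¹' Ioi (v * ε / Δ - Δ / 2)) := by
        refine measure_mono fun x hx ↦ ?_
        rw [mem_ofPred_eq, ofReal_exp_mul_gaussianPDF_lt_gaussianPDF_iff hv, hf_loss] at hx
        have hvε : 0 ≤ 2 * (v : ℝ) * ε := by positivity
        have hfx : 0 < 2 * f x + d := pos_of_mul_pos_right (hvε.trans_lt hx) (abs_nonneg _)
        rw [mem_preimage, mem_Ioi, sub_lt_iff_lt_add, div_lt_iff₀ hΔ]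
        nlinarith [mul_nonneg (sub_nonneg.2 hab) hfx.le]
    _ = gaussianReal 0 v (Ioi (v * ε / Δ - Δ / 2)) := by
        rw [← hf_map, Measure.map_apply hf measurableSet_Ioi]

lemma gaussianReal_zero_Ioi_le_of_lt_two_mul_mul {σ c T : ℝ} (hσ : 0 < σ) (hc : 0 < c)
    (hc2 : 2 / 5 < c ^ 2) (hT : σ * (2 * c ^ 2 - 1) < 2 * c * T) :
    gaussianReal 0 (σ ^ 2).toNNReal (Ioi T) ≤ ENNReal.ofReal (5 / 4 * exp (-c ^ 2 / 2)) := by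
  have hv : (σ ^ 2).toNNReal ≠ 0 := (Real.toNNReal_pos.2 (by positivity)).ne'
  have hvσ : ((σ ^ 2).toNNReal : ℝ) = σ ^ 2 := Real.coe_toNNReal _ (sq_nonneg σ)
  rcases le_or_gt 1 (2 * c ^ 2) with hc_large | hc_small
  · have hT0 : 0 ≤ T := by nlinarith
    have hTsq : σ ^ 2 * (c ^ 2 - 1) ≤ T ^ 2 := by
      have hsq : (σ * (2 * c ^ 2 - 1)) ^ 2 ≤ (2 * c * T) ^ 2 :=
        pow_le_pow_left₀ (by nlinarith) hT.le 2
      refine le_of_mul_le_mul_left (a := 4 * c ^ 2) ?_ (by positivity)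
      nlinarith [sq_nonneg σ]
    have hexp_half : exp (1 / 2) ≤ 5 / 2 :=
      (exp_bound_div_one_sub_of_interval' (by norm_num) (by norm_num)).le.trans (by norm_num)
    refine (gaussianReal_Ioi_le_ofReal_exp hv hT0).trans (ENNReal.ofReal_le_ofReal ?_)
    rw [hvσ, sub_zero]
    calc exp (-T ^ 2 / (2 * σ ^ 2)) / 2 ≤ exp (1 / 2 + -c ^ 2 / 2) / 2 := by
          gcongr
          rw [div_le_iff₀ (by positivity)]
          nlinarith
      _ = exp (1 / 2) / 2 * exp (-c ^ 2 / 2) := by rw [exp_add]; ring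
      _ ≤ 5 / 4 * exp (-c ^ 2 / 2) := by gcongr ?_ * _; linarith
  · -- here `5/4 e^{-c²/2} > 15/16`, so the crude bound `1/2 + |T|/σ ≤ 2/3` suffices
    have hσ_le : σ ≤ √(2 * π * σ ^ 2) :=
      (Real.le_sqrt' hσ).2 (by nlinarith [pi_gt_three, sq_nonneg σ])
    have hT_neg : -T ≤ σ / 6 := by
      have hc_gt : 3 / 5 < c := by nlinarith
      nlinarith
    have hexp : 3 / 4 ≤ exp (-c ^ 2 / 2) := by linarith [add_one_le_exp (-c ^ 2 / 2)]
    calc gaussianReal 0 (σ ^ 2).toNNReal (Ioi T)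
        ≤ 1 / 2 + ENNReal.ofReal ((0 - T) / √(2 * π * (σ ^ 2).toNNReal)) :=
          gaussianReal_Ioi_le_half_add hv 0 T
      _ ≤ ENNReal.ofReal (1 / 2) + ENNReal.ofReal (1 / 6) := by
          rw [hvσ, ENNReal.ofReal_div_of_pos two_pos, ENNReal.ofReal_one, ENNReal.ofReal_ofNat]
          refine add_le_add_right (ENNReal.ofReal_le_ofReal ?_) _
          rw [div_le_iff₀ (hσ.trans_le hσ_le)]
          linarith
      _ ≤ ENNReal.ofReal (5 / 4 * exp (-c ^ 2 / 2)) := by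
          rw [← ENNReal.ofReal_add (by norm_num) (by norm_num)]
          exact ENNReal.ofReal_le_ofReal (by linarith)

lemma gaussianReal_zero_Ioi_sq_mul_div_sub_half_le {ε δ Δ σ : ℝ} (hε : ε ∈ Ioo 0 1)
    (hδ : δ ∈ Ioo 0 1) (hΔ : 0 < Δ) (hσ : √(2 * log (1.25 / δ)) * Δ / ε < σ) :
    gaussianReal 0 (σ ^ 2).toNNReal (Ioi (σ ^ 2 * ε / Δ - Δ / 2)) ≤ ENNReal.ofReal δ := by
  obtain ⟨hε0, hε1⟩ := hε
  obtain ⟨hδ0, hδ1⟩ := hδ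
  set c := √(2 * log (1.25 / δ))
  have hlog : 1 / 5 < log (1.25 / δ) := by
    have hlog_lb := one_sub_inv_le_log_of_pos (x := 1.25) (by norm_num)
    have hlog_lt := log_lt_log (by norm_num) ((lt_div_iff₀ hδ0).2 (by linarith : 1.25 * δ < 1.25))
    norm_num at hlog_lb
    linarith
  have hc2 : c ^ 2 = 2 * log (1.25 / δ) := sq_sqrt (by linarith)
  have hc : 0 < c := sqrt_pos.2 (by linarith)
  have hδc : 5 / 4 * exp (-c ^ 2 / 2) = δ := by
    rw [show -c ^ 2 / 2 = -log (1.25 / δ) by rw [hc2]; ring, exp_neg, exp_log (by positivity)]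
    field_simp
    norm_num
  have hcΔ : c * Δ < σ * ε := (div_lt_iff₀ hε0).1 hσ
  have hσ0 : 0 < σ := pos_of_mul_pos_left ((by positivity : 0 < c * Δ).trans hcΔ) hε0.le
  have hT : σ * (2 * c ^ 2 - 1) < 2 * c * (σ ^ 2 * ε / Δ - Δ / 2) := by
    have hr : c < σ * ε / Δ := (lt_div_iff₀ hΔ).2 hcΔ
    rw [show σ ^ 2 * ε / Δ = σ * (σ * ε / Δ) by ring]
    nlinarith [mul_lt_mul_of_pos_left hr (mul_pos hc hσ0)]
  rw [← hδc]
  exact gaussianReal_zero_Ioi_le_of_lt_two_mul_mul hσ0 hc (by linarith) hT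

end ProbabilityTheory

/-- The Gaussian mechanism: for ε ∈ (0,1), δ ∈ (0,1), sensitivity Δ > 0 and
σ > √(2 ln(1.25/δ)) · Δ/ε, for all means a, b with |a − b| ≤ Δ and every Borel set S,
N(a,σ²)(S) ≤ e^ε · N(b,σ²)(S) + δ. -/
theorem gaussian_mechanism_dp (ε δ Δ σ : ℝ)
    (hε : ε ∈ Set.Ioo (0 : ℝ) 1) (hδ : δ ∈ Set.Ioo (0 : ℝ) 1) (hΔ : 0 < Δ)
    (hσ : σ > Real.sqrt (2 * Real.log (1.25 / δ)) * Δ / ε) :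
    ∀ a b : ℝ, |a - b| ≤ Δ → ∀ S : Set ℝ, MeasurableSet S →
      ((gaussianReal a (Real.toNNReal (σ ^ 2))) S).toReal
        ≤ Real.exp ε * ((gaussianReal b (Real.toNNReal (σ ^ 2))) S).toReal + δ := by
  intro a b hab S _
  have hσ0 : 0 < σ := (div_nonneg (mul_nonneg (sqrt_nonneg _) hΔ.le) hε.1.le).trans_lt hσ
  have hv : (σ ^ 2).toNNReal ≠ 0 := (Real.toNNReal_pos.2 (by positivity)).ne'
  have hsplit := withDensity_apply_le_mul_add_setOf_lt (μ := volume)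
    (f := gaussianPDF a (σ ^ 2).toNNReal) (measurable_gaussianPDF b (σ ^ 2).toNNReal)
    (ENNReal.ofReal (exp ε)) S
  rw [← gaussianReal_of_var_ne_zero _ hv, ← gaussianReal_of_var_ne_zero _ hv] at hsplit
  have hloss := gaussianReal_setOf_ofReal_exp_mul_gaussianPDF_lt_le hv hε.1.le hΔ hab
  rw [Real.coe_toNNReal _ (sq_nonneg σ)] at hloss
  have htail := gaussianReal_zero_Ioi_sq_mul_div_sub_half_le hε hδ hΔ hσ
  refine ENNReal.toReal_le_of_le_ofReal (add_nonneg (by positivity) hδ.1.le) ?_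
  rw [ENNReal.ofReal_add (by positivity) hδ.1.le, ENNReal.ofReal_mul (exp_pos ε).le,
    ENNReal.ofReal_toReal (measure_ne_top _ _)]
  exact hsplit.trans (add_le_add_right (hloss.trans htail) _)
end

section
/- Let s > 0 and let a > b be real numbers. Let P = N(a, s²) and Q = N(b, s²) be Gaussian probability measures on ℝ. Then one-sided threshold tests are optimal in the Neyman–Pearson sense: for every Borel measurable set S ⊆ ℝ and every t ∈ ℝ, if Q(S) ≤ Q((t, ∞)) then P(S) ≤ P((t, ∞)). Equivalently, among all rejection regions of a given size under Q, the region (t,∞) maximizes the probability under P. -/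
open MeasureTheory ProbabilityTheory Real Set
open scoped NNReal ENNReal

/-!
The likelihood ratio of `N(a, v)` to `N(b, v)` at `x` is `exp ((a - b) (2x - a - b) / 2v)`,
increasing in `x` when `b ≤ a`. With `c` its value at `t` and `T = (t, ∞)`, this gives
`P ≤ c Q` off `T` and `c Q ≤ P` on `T`, so `P S - P T = P (S \ T) - P (T \ S)` is at most
`c (Q (S \ T) - Q (T \ S)) = c (Q S - Q T) ≤ 0`: the Neyman–Pearson argument.
-/

section NeymanPearson

variable {α : Type*} [MeasurableSpace α] {P Q : Measure α} [IsFiniteMeasure Q] {S T : Set α}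
  {c : ℝ≥0∞}

/-- The Neyman–Pearson lemma for the deterministic test with rejection region `T`. -/
theorem measure_le_measure_of_likelihoodRatio_bounds (hS : MeasurableSet S)
    (hT : MeasurableSet T) (h_out : P.restrict Tᶜ ≤ c • Q.restrict Tᶜ)
    (h_in : c • Q.restrict T ≤ P.restrict T) (hQ : Q S ≤ Q T) : P S ≤ P T := by
  have hQ_diff : Q (S \ T) ≤ Q (T \ S) := by
    rw [← measure_inter_add_sdiff S hT, ← measure_inter_add_sdiff₀ T hS.nullMeasurableSet,
      inter_comm] at hQ
    exact (ENNReal.add_le_add_iff_left (measure_ne_top Q _)).mp hQ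
  have h_out' : P (S \ T) ≤ c * Q (S \ T) := by
    simpa [Measure.restrict_apply hS, sdiff_eq] using h_out S
  have h_in' : c * Q (T \ S) ≤ P (T \ S) := by
    simpa [Measure.restrict_apply hS.compl, sdiff_eq, inter_comm] using h_in Sᶜ
  calc P S = P (S ∩ T) + P (S \ T) := (measure_inter_add_sdiff S hT).symm
    _ ≤ P (S ∩ T) + c * Q (T \ S) := by gcongr; exact h_out'.trans (by gcongr)
    _ ≤ P (T ∩ S) + P (T \ S) := by rw [inter_comm]; gcongr
    _ = P T := measure_inter_add_sdiff T hS

end NeymanPearson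

theorem withDensity_restrict_mono {α : Type*} [MeasurableSpace α] {μ : Measure α}
    {f g : α → ℝ≥0∞} {A : Set α} (hA : MeasurableSet A) (h : ∀ x ∈ A, f x ≤ g x) :
    (μ.withDensity f).restrict A ≤ (μ.withDensity g).restrict A := by
  rw [restrict_withDensity hA, restrict_withDensity hA]
  exact withDensity_mono (ae_restrict_of_forall_mem hA h)

noncomputable def gaussianLikelihoodRatio (a b : ℝ) (v : ℝ≥0) (x : ℝ) : ℝ :=
  exp ((a - b) * (2 * x - a - b) / (2 * v))

theorem gaussianLikelihoodRatio_pos (a b : ℝ) (v : ℝ≥0) (x : ℝ) :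
    0 < gaussianLikelihoodRatio a b v x :=
  exp_pos _

theorem gaussianLikelihoodRatio_monotone {a b : ℝ} (hab : b ≤ a) (v : ℝ≥0) :
    Monotone (gaussianLikelihoodRatio a b v) := fun x y hxy => by
  unfold gaussianLikelihoodRatio
  gcongr

theorem gaussianPDFReal_eq_likelihoodRatio_mul (a b : ℝ) (v : ℝ≥0) (x : ℝ) :
    gaussianPDFReal a v x = gaussianLikelihoodRatio a b v x * gaussianPDFReal b v x := by
  rw [gaussianPDFReal, gaussianPDFReal, gaussianLikelihoodRatio, mul_left_comm, ← exp_add]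
  congr 2
  ring

theorem gaussianPDF_eq_likelihoodRatio_mul (a b : ℝ) (v : ℝ≥0) :
    gaussianPDF a v =
      fun x => ENNReal.ofReal (gaussianLikelihoodRatio a b v x) * gaussianPDF b v x := by
  ext x
  rw [gaussianPDF, gaussianPDF, gaussianPDFReal_eq_likelihoodRatio_mul a b,
    ENNReal.ofReal_mul (gaussianLikelihoodRatio_pos a b v x).le]

section Gaussian

variable {a b : ℝ} {v : ℝ≥0}

theorem gaussianReal_restrict_Iic_le (hab : b ≤ a) (hv : v ≠ 0) (t : ℝ) :
    (gaussianReal a v).restrict (Iic t)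
      ≤ ENNReal.ofReal (gaussianLikelihoodRatio a b v t) •
          (gaussianReal b v).restrict (Iic t) := by
  rw [gaussianReal_of_var_ne_zero a hv, gaussianReal_of_var_ne_zero b hv, ← Measure.restrict_smul,
    ← withDensity_smul _ (measurable_gaussianPDF b v), gaussianPDF_eq_likelihoodRatio_mul a b]
  refine withDensity_restrict_mono measurableSet_Iic fun x hx => ?_
  simp only [Pi.smul_apply, smul_eq_mul]
  gcongr
  exact gaussianLikelihoodRatio_monotone hab v hx

theorem smul_gaussianReal_restrict_Ioi_le (hab : b ≤ a) (hv : v ≠ 0) (t : ℝ) :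
    ENNReal.ofReal (gaussianLikelihoodRatio a b v t) • (gaussianReal b v).restrict (Ioi t)
      ≤ (gaussianReal a v).restrict (Ioi t) := by
  rw [gaussianReal_of_var_ne_zero a hv, gaussianReal_of_var_ne_zero b hv, ← Measure.restrict_smul,
    ← withDensity_smul _ (measurable_gaussianPDF b v), gaussianPDF_eq_likelihoodRatio_mul a b]
  refine withDensity_restrict_mono measurableSet_Ioi fun x hx => ?_
  simp only [Pi.smul_apply, smul_eq_mul]
  gcongr
  exact gaussianLikelihoodRatio_monotone hab v (le_of_lt hx)

end Gaussian

/-- Neyman–Pearson optimality of one-sided threshold tests for Gaussians with common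
variance s² and means a > b: for every Borel set S and every threshold t, if
N(b,s²)(S) ≤ N(b,s²)((t,∞)) then N(a,s²)(S) ≤ N(a,s²)((t,∞)). -/
theorem gaussian_threshold_tests_optimal (s a b : ℝ) (hs : 0 < s) (hab : b < a) :
    ∀ S : Set ℝ, MeasurableSet S → ∀ t : ℝ,
      (gaussianReal b (Real.toNNReal (s ^ 2))) S
          ≤ (gaussianReal b (Real.toNNReal (s ^ 2))) (Set.Ioi t) →
      (gaussianReal a (Real.toNNReal (s ^ 2))) S
          ≤ (gaussianReal a (Real.toNNReal (s ^ 2))) (Set.Ioi t) := by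
  intro S hS t hQ
  have hv : Real.toNNReal (s ^ 2) ≠ 0 := by simpa using hs.ne'
  refine measure_le_measure_of_likelihoodRatio_bounds hS measurableSet_Ioi ?_
    (smul_gaussianReal_restrict_Ioi_le hab.le hv t) hQ
  rw [compl_Ioi]
  exact gaussianReal_restrict_Iic_le hab.le hv t
end

section
/- Let s > 0, μ ∈ ℝ. The pushforward of the Gaussian measure N(μ, s²) under the log-likelihood-ratio map x ↦ (2μx − μ²)/(2s²) (the logarithm of dN(μ,s²)/dN(0,s²)) is the Gaussian measure N(μ²/(2s²), μ²/s²); that is, the privacy loss random variable of the Gaussian mechanism is Gaussian with mean μ²/(2s²) and variance μ²/s². -/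
open MeasureTheory ProbabilityTheory

/-- The privacy loss of the Gaussian mechanism is Gaussian: pushing N(μ,s²) forward under
the log-likelihood-ratio map x ↦ (2μx − μ²)/(2s²) yields N(μ²/(2s²), μ²/s²). -/
theorem gaussian_privacy_loss_distribution (s μ : ℝ) (hs : 0 < s) :
    (gaussianReal μ (Real.toNNReal (s ^ 2))).map
        (fun x => (2 * μ * x - μ ^ 2) / (2 * s ^ 2))
      = gaussianReal (μ ^ 2 / (2 * s ^ 2)) (Real.toNNReal (μ ^ 2 / s ^ 2)) := by
  have hs2 : (s:ℝ)^2 ≠ 0 := by positivity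
  have hfun : (fun x : ℝ => (2 * μ * x - μ ^ 2) / (2 * s ^ 2))
      = (fun x => x + (-(μ ^ 2) / (2 * s ^ 2))) ∘ (fun x => (μ / s ^ 2) * x) := by
    funext x
    simp only [Function.comp]
    field_simp
    ring
  rw [hfun, ← Measure.map_map (by fun_prop) (by fun_prop),
    gaussianReal_map_const_mul, gaussianReal_map_add_const]
  congr 1
  · field_simp
    ring
  · rw [← NNReal.coe_inj]
    push_cast
    rw [Real.coe_toNNReal _ (by positivity), Real.coe_toNNReal _ (by positivity)]
    field_simp
end
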